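/- Let E be a finite-dimensional normed space, B : E → E an invertible linear map admitting a B-invariant splitting E = E^s ⊕ E^u with ‖B|_{E^s}‖ ≤ μ < 1 and ‖B^{-1}|_{E^u}‖ ≤ μ < 1. Let A : X → X be a bijection of a set X and φ : X → E a bounded function. Then there exists a unique bounded function ψ : X → E with ψ(A x) − B(ψ(x)) = φ(x) for all x ∈ X. Moreover, if X is a compact metric space, A is a homeomorphism, and φ is continuous, then ψ is continuous. -/

import Mathlib

/-!
Along the invariant splitting the equation decouples. On `Es` it reads
`ψ = B ψ ∘ A⁻¹ + φ ∘ A⁻¹` and on `Eu` it reads `ψ = B⁻¹ ψ ∘ A - B⁻¹ φ`; both right-hand sides are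
`μ`-contractions of the space of bounded continuous functions, for any topology in which `A` is a
homeomorphism (the discrete one, or the given one), so each has a fixed point. Conversely, a
bounded solution `f = L f ∘ A` of the homogeneous equation with `‖L‖ ≤ μ < 1` satisfies
`‖f‖∞ ≤ μⁿ ‖f‖∞` for all `n`, hence vanishes.
-/

open BoundedContinuousFunction Filter Function Topology
open scoped NNReal

section TwistedEquation

variable {X F : Type*} [NormedAddCommGroup F] {K : ℝ≥0}

theorem eq_zero_of_bounded_of_eq_map_comp {L : F → F} (hK : K < 1)
    (hL : ∀ v, ‖L v‖ ≤ K * ‖v‖) {A : X → X} {f : X → F} (hf : ∃ C, ∀ x, ‖f x‖ ≤ C)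
    (hfA : ∀ x, f x = L (f (A x))) : f = 0 := by
  obtain ⟨C, hC⟩ := hf
  have hpow : ∀ n x, ‖f x‖ ≤ K ^ n * C := by
    intro n
    induction n with
    | zero => simpa using hC
    | succ n ih =>
      intro x
      calc ‖f x‖ = ‖L (f (A x))‖ := by rw [← hfA]
        _ ≤ K * ‖f (A x)‖ := hL _
        _ ≤ K * (K ^ n * C) := by gcongr; exact ih _
        _ = K ^ (n + 1) * C := by ring
  have hlim : Tendsto (fun n ↦ (K : ℝ) ^ n * C) atTop (𝓝 0) := by
    simpa using (tendsto_pow_atTop_nhds_zero_of_lt_one K.2 hK).mul_const C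
  funext x
  exact norm_le_zero_iff.mp (ge_of_tendsto' hlim fun n ↦ hpow n x)

variable [NormedSpace ℝ F] [CompleteSpace F] [TopologicalSpace X]

theorem BoundedContinuousFunction.exists_eq_map_comp_add (L : F →L[ℝ] F) (hK : K < 1)
    (hL : ∀ v, ‖L v‖ ≤ K * ‖v‖) (A : C(X, X)) (g : X →ᵇ F) :
    ∃ f : X →ᵇ F, ∀ x, f x = L (f (A x)) + g x := by
  let T : (X →ᵇ F) → (X →ᵇ F) := fun f ↦ L.compLeftContinuousBounded X (f.compContinuous A) + g
  have hT : ContractingWith K T := by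
    refine ⟨hK, LipschitzWith.of_dist_le_mul fun f₁ f₂ ↦ (dist_le (by positivity)).2 fun x ↦ ?_⟩
    calc dist (T f₁ x) (T f₂ x) = ‖L (f₁ (A x) - f₂ (A x))‖ := by
          simp [T, dist_eq_norm, map_sub]
      _ ≤ K * ‖f₁ (A x) - f₂ (A x)‖ := hL _
      _ ≤ K * dist f₁ f₂ := by gcongr; rw [← dist_eq_norm]; exact dist_coe_le_dist _
  exact ⟨hT.fixedPoint T, fun x ↦ congr($(hT.fixedPoint_isFixedPt) x).symm⟩

end TwistedEquation

theorem LinearEquiv.symm_apply_mem_of_forall_apply_mem {K V : Type*} [DivisionRing K]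
    [AddCommGroup V] [Module K V] {p : Submodule K V} [FiniteDimensional K p] (e : V ≃ₗ[K] V)
    (he : ∀ v ∈ p, e v ∈ p) : ∀ v ∈ p, e.symm v ∈ p := by
  intro v hv
  obtain ⟨w, hw, rfl⟩ := (LinearMap.injOn_iff_surjOn (f := e.toLinearMap) he).1
    e.injective.injOn hv
  simpa using hw

theorem Submodule.projection_apply_comm {R M : Type*} [Ring R] [AddCommGroup M]
    [Module R M] {p q : Submodule R M} (h : IsCompl p q) {T : M →ₗ[R] M}
    (hp : ∀ v ∈ p, T v ∈ p) (hq : ∀ v ∈ q, T v ∈ q) (x : M) :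
    p.projection q h (T x) = T (p.projection q h x) := by
  conv_lhs => rw [← projection_add_projection_eq_self h x, map_add]
  rw [map_add, projection_apply_of_mem_left h (hp _ (projection_apply_mem h x)),
    projection_apply_of_mem_right h (hq _ (projection_apply_mem h.symm x)), add_zero]

section Hyperbolic

variable {E : Type*} [NormedAddCommGroup E] [NormedSpace ℝ E] [FiniteDimensional ℝ E]
  {B : E ≃L[ℝ] E} {Es Eu : Submodule ℝ E} {K : ℝ≥0}

theorem exists_bounded_solution_of_hyperbolic (hcompl : IsCompl Es Eu)
    (hBs : ∀ v ∈ Es, B v ∈ Es) (hBu : ∀ v ∈ Eu, B v ∈ Eu) (hK : K < 1)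
    (hs : ∀ v ∈ Es, ‖B v‖ ≤ K * ‖v‖) (hu : ∀ v ∈ Eu, ‖B.symm v‖ ≤ K * ‖v‖)
    {X : Type*} [TopologicalSpace X] (A : X ≃ₜ X) (φ : X →ᵇ E) :
    ∃ ψ : X →ᵇ E, ∀ x, ψ (A x) - B (ψ x) = φ x := by
  have hB'u : ∀ v ∈ Eu, B.symm v ∈ Eu := B.toLinearEquiv.symm_apply_mem_of_forall_apply_mem hBu
  let Ps : E →L[ℝ] Es := (Es.projectionOnto Eu hcompl).toContinuousLinearMap
  let Pu : E →L[ℝ] Eu := (Eu.projectionOnto Es hcompl.symm).toContinuousLinearMap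
  let Bs : Es →L[ℝ] Es := (B : E →L[ℝ] E).restrict hBs
  let Bu' : Eu →L[ℝ] Eu := (B.symm : E →L[ℝ] E).restrict hB'u
  obtain ⟨fs, hfs⟩ := exists_eq_map_comp_add Bs hK (fun v ↦ hs v v.2) (A.symm : C(X, X))
    ((Ps.compLeftContinuousBounded X φ).compContinuous (A.symm : C(X, X)))
  obtain ⟨fu, hfu⟩ := exists_eq_map_comp_add Bu' hK (fun v ↦ hu v v.2) (A : C(X, X))
    (-(Bu' ∘L Pu).compLeftContinuousBounded X φ)
  refine ⟨Es.subtypeL.compLeftContinuousBounded X fs + Eu.subtypeL.compLeftContinuousBounded X fu,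
    fun x ↦ ?_⟩
  have hs' : (fs (A x) : E) = B (fs x) + Ps (φ x) := by
    rw [hfs (A x)]
    simp [Bs, Ps]
    rfl
  have hu' : B (fu x) = fu (A x) - Pu (φ x) := by
    have hBBu : ∀ v : Eu, B (Bu' v) = v := fun v ↦ B.apply_symm_apply v
    rw [hfu x]
    simp [hBBu, Pu, sub_eq_add_neg]
  calc (fs (A x) : E) + fu (A x) - B (fs x + fu x) = (Ps (φ x) : E) + Pu (φ x) := by
        rw [map_add, hs', hu']; abel
    _ = φ x := Submodule.projection_add_projection_eq_self hcompl (φ x)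

theorem eq_zero_of_bounded_of_apply_eq_map_of_hyperbolic (hcompl : IsCompl Es Eu)
    (hBs : ∀ v ∈ Es, B v ∈ Es) (hBu : ∀ v ∈ Eu, B v ∈ Eu) (hK : K < 1)
    (hs : ∀ v ∈ Es, ‖B v‖ ≤ K * ‖v‖) (hu : ∀ v ∈ Eu, ‖B.symm v‖ ≤ K * ‖v‖)
    {X : Type*} (A : X ≃ X) {δ : X → E} (hδ : ∃ C, ∀ x, ‖δ x‖ ≤ C)
    (hδA : ∀ x, δ (A x) = B (δ x)) : δ = 0 := by
  obtain ⟨C, hC⟩ := hδ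
  have hB'u : ∀ v ∈ Eu, B.symm v ∈ Eu := B.toLinearEquiv.symm_apply_mem_of_forall_apply_mem hBu
  let Ps : E →L[ℝ] Es := (Es.projectionOnto Eu hcompl).toContinuousLinearMap
  let Pu : E →L[ℝ] Eu := (Eu.projectionOnto Es hcompl.symm).toContinuousLinearMap
  have hPsB (v : E) : (Ps (B v) : E) = B (Ps v) :=
    Es.projection_apply_comm hcompl (T := (B : E →ₗ[ℝ] E)) hBs hBu v
  have hPuB (v : E) : (Pu (B v) : E) = B (Pu v) :=
    Eu.projection_apply_comm hcompl.symm (T := (B : E →ₗ[ℝ] E)) hBu hBs v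
  have hstable : (fun x ↦ Ps (δ x)) = 0 := by
    refine eq_zero_of_bounded_of_eq_map_comp (L := (B : E →L[ℝ] E).restrict hBs) (A := A.symm) hK
      (fun v ↦ hs v v.2) ⟨‖Ps‖ * C, fun x ↦ Ps.le_opNorm_of_le (hC x)⟩ fun y ↦ Subtype.ext ?_
    conv_lhs => rw [← A.apply_symm_apply y, hδA]
    exact hPsB _
  have hunstable : (fun x ↦ Pu (δ x)) = 0 := by
    refine eq_zero_of_bounded_of_eq_map_comp (L := (B.symm : E →L[ℝ] E).restrict hB'u) (A := A) hK
      (fun v ↦ hu v v.2) ⟨‖Pu‖ * C, fun x ↦ Pu.le_opNorm_of_le (hC x)⟩ fun x ↦ Subtype.ext ?_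
    show _ = B.symm (Pu (δ (A x)) : E)
    rw [hδA, hPuB, B.symm_apply_apply]
  funext x
  rw [Pi.zero_apply, ← Submodule.projection_add_projection_eq_self hcompl (δ x)]
  change (Ps (δ x) : E) + Pu (δ x) = 0
  rw [congr_fun hstable x, congr_fun hunstable x]
  simp

end Hyperbolic

/-- Twisted cohomological equation with hyperbolic twist: if `B` is an invertible linear map of a
finite-dimensional normed space with invariant splitting `E = Es ⊕ Eu`, contracting by `μ < 1`
on `Es` and with `B⁻¹` contracting by `μ < 1` on `Eu`, `A : X ≃ X` is a bijection and `φ`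
is bounded, then there is a unique bounded `ψ` with `ψ(Ax) − B(ψ x) = φ x`; moreover if `X` is a
compact metrizable space, `A` a homeomorphism and `φ` continuous, then any such bounded solution
is continuous. -/
theorem stmt10 {E : Type*} [NormedAddCommGroup E] [NormedSpace ℝ E] [FiniteDimensional ℝ E]
    (B : E ≃L[ℝ] E) (Es Eu : Submodule ℝ E) (hcompl : IsCompl Es Eu)
    (hBs : ∀ v ∈ Es, B v ∈ Es) (hBu : ∀ v ∈ Eu, B v ∈ Eu)
    (μ : ℝ) (hμ0 : 0 < μ) (hμ1 : μ < 1)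
    (hs : ∀ v ∈ Es, ‖B v‖ ≤ μ * ‖v‖) (hu : ∀ v ∈ Eu, ‖B.symm v‖ ≤ μ * ‖v‖)
    {X : Type*} (A : X ≃ X) (φ : X → E) (hφ : ∃ Cφ, ∀ x, ‖φ x‖ ≤ Cφ) :
    (∃! ψ : X → E, (∃ Cψ, ∀ x, ‖ψ x‖ ≤ Cψ) ∧ ∀ x, ψ (A x) - B (ψ x) = φ x) ∧
    (∀ (tX : TopologicalSpace X), @TopologicalSpace.MetrizableSpace X tX → @CompactSpace X tX →
      @Continuous X X tX tX A → @Continuous X X tX tX A.symm →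
      @Continuous X E tX _ φ →
      ∀ ψ : X → E, (∃ Cψ, ∀ x, ‖ψ x‖ ≤ Cψ) → (∀ x, ψ (A x) - B (ψ x) = φ x) →
        @Continuous X E tX _ ψ) := by
  obtain ⟨Cφ, hCφ⟩ := hφ
  have hK : (⟨μ, hμ0.le⟩ : ℝ≥0) < 1 := hμ1
  have unique (ψ₁ ψ₂ : X → E) (hb₁ : ∃ C, ∀ x, ‖ψ₁ x‖ ≤ C) (hb₂ : ∃ C, ∀ x, ‖ψ₂ x‖ ≤ C)
      (he₁ : ∀ x, ψ₁ (A x) - B (ψ₁ x) = φ x) (he₂ : ∀ x, ψ₂ (A x) - B (ψ₂ x) = φ x) :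
      ψ₁ = ψ₂ := by
    obtain ⟨C₁, hC₁⟩ := hb₁
    obtain ⟨C₂, hC₂⟩ := hb₂
    refine sub_eq_zero.mp <| eq_zero_of_bounded_of_apply_eq_map_of_hyperbolic
      hcompl hBs hBu hK hs hu A
      ⟨C₁ + C₂, fun x ↦ (norm_sub_le _ _).trans (add_le_add (hC₁ x) (hC₂ x))⟩ fun x ↦ ?_
    simp only [Pi.sub_apply, map_sub]
    linear_combination (norm := abel) he₁ x - he₂ x
  refine ⟨?_, fun tX _ _ hA hA' hφc ψ hψ he ↦ ?_⟩
  · -- for the discrete topology every bounded function is a bounded continuous one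
    let _ : TopologicalSpace X := ⊥
    have : DiscreteTopology X := ⟨rfl⟩
    obtain ⟨ψ, hψ⟩ := exists_bounded_solution_of_hyperbolic hcompl hBs hBu hK hs hu
      A.toHomeomorphOfDiscrete (ofNormedAddCommGroupDiscrete φ Cφ hCφ)
    exact ⟨ψ, ⟨⟨‖ψ‖, ψ.norm_coe_le_norm⟩, hψ⟩, fun ψ' ⟨hb, he⟩ ↦
      unique ψ' ψ hb ⟨‖ψ‖, ψ.norm_coe_le_norm⟩ he hψ⟩
  · let _ := tX
    obtain ⟨ψc, hψc⟩ := exists_bounded_solution_of_hyperbolic hcompl hBs hBu hK hs hu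
      ⟨A, hA, hA'⟩ (ofNormedAddCommGroup φ hφc Cφ hCφ)
    rw [unique ψ ψc hψ ⟨‖ψc‖, ψc.norm_coe_le_norm⟩ he hψc]
    exact ψc.continuous
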